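/- Skorokhod-type obstacle problem, uniqueness: let η_t := max_{0≤v≤t} L_v for t ∈ {0,...,N-1}. Suppose ζ = (ζ_t)_{t=0,...,N-1} is another adapted, square-integrable, a.s. nondecreasing process such that the process Z defined by Z_t := E_t[Σ_{u=t}^{N-1} ζ_u + X_N] for t ∈ {0,...,N-1} and Z_N := X_N satisfies Z_t ≥ X_t a.s. for every t ∈ {0,...,N}, and a.s., for every t ∈ {0,...,N-1} with ζ_t > ζ_{t-1} (convention ζ_{-1} = -∞, so t = 0 is always a point of increase) one has Z_t = X_t. Then ζ_t = η_t a.s. for every t ∈ {0,...,N-1}. -/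

import Mathlib

open MeasureTheory Filter

/-- Running maximum `max_{t ≤ v ≤ u} L v ω` (intended for `t ≤ u`). -/
noncomputable def runMax {Ω : Type*} (L : ℕ → Ω → ℝ) (t u : ℕ) (ω : Ω) : ℝ :=
  (Finset.Icc t u).fold max (L t ω) fun v => L v ω

/-- Running minimum `min_{t ≤ v ≤ u} K v ω` (intended for `t ≤ u`). -/
noncomputable def runMin {Ω : Type*} (K : ℕ → Ω → ℝ) (t u : ℕ) (ω : Ω) : ℝ :=
  (Finset.Icc t u).fold min (K t ω) fun v => K v ω

/-- A discrete-time nonlinear expectation on the horizon `{0, ..., N}`: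
a family of maps `E t` sending square-integrable `F N`-measurable random
variables to square-integrable `F t`-measurable random variables, satisfying
monotonicity, strict monotonicity, translation invariance, the tower property,
the zero-one law and monotone convergence. -/
structure NLExp {Ω : Type*} {m0 : MeasurableSpace Ω} (μ : Measure Ω)
    (F : Filtration ℕ m0) (N : ℕ) where
  E : ℕ → (Ω → ℝ) → Ω → ℝ
  adapted : ∀ t, t ≤ N → ∀ ξ : Ω → ℝ, StronglyMeasurable[F N] ξ → MemLp ξ 2 μ →
    StronglyMeasurable[F t] (E t ξ)
  sqInt : ∀ t, t ≤ N → ∀ ξ : Ω → ℝ, StronglyMeasurable[F N] ξ → MemLp ξ 2 μ →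
    MemLp (E t ξ) 2 μ
  mono : ∀ t, t ≤ N → ∀ ξ η : Ω → ℝ, StronglyMeasurable[F N] ξ → MemLp ξ 2 μ →
    StronglyMeasurable[F N] η → MemLp η 2 μ → ξ ≤ᵐ[μ] η → E t ξ ≤ᵐ[μ] E t η
  strictMono : ∀ t, t ≤ N → ∀ ξ η : Ω → ℝ, StronglyMeasurable[F N] ξ → MemLp ξ 2 μ →
    StronglyMeasurable[F N] η → MemLp η 2 μ → ξ ≤ᵐ[μ] η →
    0 < μ {ω | ξ ω < η ω} → 0 < μ {ω | E t ξ ω < E t η ω}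
  translation : ∀ t, t ≤ N → ∀ ξ ζ : Ω → ℝ, StronglyMeasurable[F N] ξ → MemLp ξ 2 μ →
    StronglyMeasurable[F t] ζ → MemLp ζ 2 μ → E t (ξ + ζ) =ᵐ[μ] E t ξ + ζ
  tower : ∀ s t, s ≤ t → t ≤ N → ∀ ξ : Ω → ℝ, StronglyMeasurable[F N] ξ → MemLp ξ 2 μ →
    E s (E t ξ) =ᵐ[μ] E s ξ
  zeroOne : ∀ t, t ≤ N → ∀ ξ η : Ω → ℝ, StronglyMeasurable[F N] ξ → MemLp ξ 2 μ →
    StronglyMeasurable[F N] η → MemLp η 2 μ → ∀ A : Set Ω, MeasurableSet[F t] A →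
    E t (A.indicator ξ + Aᶜ.indicator η) =ᵐ[μ]
      A.indicator (E t ξ) + Aᶜ.indicator (E t η)
  monoConv : ∀ t, t ≤ N → ∀ (ξs : ℕ → Ω → ℝ) (ξ : Ω → ℝ),
    (∀ n, StronglyMeasurable[F N] (ξs n)) → (∀ n, MemLp (ξs n) 2 μ) →
    StronglyMeasurable[F N] ξ → MemLp ξ 2 μ →
    (∀ᵐ ω ∂μ, (Monotone fun n => ξs n ω) ∨ (Antitone fun n => ξs n ω)) →
    (∀ᵐ ω ∂μ, Tendsto (fun n => ξs n ω) atTop (nhds (ξ ω))) →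
    ∀ᵐ ω ∂μ, Tendsto (fun n => E t (ξs n) ω) atTop (nhds (E t ξ ω))

/-!
The lower bound `L_t ≤ ζ_t` comes from optional stopping. Let `σ` be the first time after `t` at
which `ζ` increases, or `N`. Then `Z_σ = X_σ`, so `Z_t = E_t[∑_{t ≤ u < σ} ζ_u + X_σ]`, while
`max_{σ ≤ v ≤ u} L_v ≤ max_{t ≤ v ≤ u} L_v` and the representation of `X` give
`E_t[∑_{t ≤ u < σ} max_{t ≤ v ≤ u} L_v + X_σ] ≤ X_t ≤ Z_t`. On `{ζ_t < L_t}` the first integrand is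
strictly smaller than the second, since `ζ_u ≤ ζ_t` before `σ`; by strict monotonicity and the
zero-one law this `F_t`-event is null.

Once `L ≤ ζ` and `ζ` is nondecreasing, `max_{t ≤ v ≤ u} L_v ≤ ζ_u`, and the same comparison of the
representations of `X_t` and `Z_t` is strict on `{L_t < ζ_t}`; at a point of increase `Z_t = X_t`,
so `ζ_t ≤ L_t` there. A nondecreasing sequence that dominates `L` and meets it at each of its
points of increase is the running maximum of `L`.
-/

section RunMax
variable {Ω : Type*} {L : ℕ → Ω → ℝ} {s t u v : ℕ} {ω : Ω}

lemma le_runMax (htv : t ≤ v) (hvu : v ≤ u) : L v ω ≤ runMax L t u ω :=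
  (Finset.le_fold_max _).2 (Or.inr ⟨v, Finset.mem_Icc.2 ⟨htv, hvu⟩, le_rfl⟩)

lemma runMax_le {c : ℝ} (htu : t ≤ u) (hc : ∀ v, t ≤ v → v ≤ u → L v ω ≤ c) :
    runMax L t u ω ≤ c :=
  (Finset.fold_max_le _).2
    ⟨hc t le_rfl htu, fun v hv => hc v (Finset.mem_Icc.1 hv).1 (Finset.mem_Icc.1 hv).2⟩

@[simp]
lemma runMax_self : runMax L t t ω = L t ω :=
  le_antisymm (runMax_le le_rfl fun _ h₁ h₂ => by rw [le_antisymm h₂ h₁]) (le_runMax le_rfl le_rfl)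

lemma runMax_anti_left (hst : s ≤ t) (htu : t ≤ u) : runMax L t u ω ≤ runMax L s u ω :=
  runMax_le htu fun _ hv₁ hv₂ => le_runMax (hst.trans hv₁) hv₂

lemma runMax_succ (htu : t ≤ u) :
    runMax L t (u + 1) ω = max (runMax L t u ω) (L (u + 1) ω) := by
  refine le_antisymm (runMax_le (by omega) fun v hv₁ hv₂ => ?_)
    (max_le (runMax_le htu fun v hv₁ hv₂ => le_runMax hv₁ (by omega)) (le_runMax (by omega) le_rfl))
  rcases Nat.lt_or_eq_of_le hv₂ with hv | rfl
  · exact (le_runMax hv₁ (Nat.lt_succ_iff.1 hv)).trans (le_max_left _ _)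
  · exact le_max_right _ _

lemma runMax_eq_max_runMax_succ (htu : t < u) :
    runMax L t u ω = max (L t ω) (runMax L (t + 1) u ω) := by
  refine le_antisymm (runMax_le htu.le fun v hv₁ hv₂ => ?_)
    (max_le (le_runMax le_rfl htu.le) (runMax_anti_left (Nat.le_succ t) htu))
  rcases Nat.eq_or_lt_of_le hv₁ with rfl | hv
  · exact le_max_left _ _
  · exact (le_runMax hv hv₂).trans (le_max_right _ _)

lemma runMax_le_of_le_of_monotone {ζ : ℕ → Ω → ℝ} {N : ℕ}
    (hmono : ∀ s t, s ≤ t → t < N → ζ s ω ≤ ζ t ω) (hle : ∀ v, v < N → L v ω ≤ ζ v ω)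
    (htu : t ≤ u) (hu : u < N) : runMax L t u ω ≤ ζ u ω :=
  runMax_le htu fun v _ hvu => (hle v (by omega)).trans (hmono v u hvu hu)

lemma eq_runMax_of_le_of_le_at_increase {ζ : ℕ → Ω → ℝ} {N : ℕ}
    (hmono : ∀ s t, s ≤ t → t < N → ζ s ω ≤ ζ t ω) (hle : ∀ t, t < N → L t ω ≤ ζ t ω)
    (hge : ∀ t, t < N → (t = 0 ∨ ζ (t - 1) ω < ζ t ω) → ζ t ω ≤ L t ω) :
    ∀ t, t < N → ζ t ω = runMax L 0 t ω := by
  intro t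
  induction t with
  | zero => exact fun h => runMax_self.symm ▸ le_antisymm (hge 0 h (Or.inl rfl)) (hle 0 h)
  | succ n ih =>
    intro hn
    rw [runMax_succ n.zero_le, ← ih (by omega)]
    rcases (hmono n (n + 1) n.le_succ hn).eq_or_lt with heq | hlt
    · rw [max_eq_left (heq ▸ hle (n + 1) hn), heq]
    · have := le_antisymm (hge (n + 1) hn (Or.inr hlt)) (hle (n + 1) hn)
      rw [max_eq_right (hlt.le.trans this.le), this]

lemma runMax_succ_eq_sup (htu : t ≤ u) :
    (fun ω => runMax L t (u + 1) ω) = (fun ω => runMax L t u ω) ⊔ L (u + 1) := by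
  funext ω
  exact runMax_succ htu

lemma stronglyMeasurable_runMax {m : MeasurableSpace Ω} (htu : t ≤ u)
    (hL : ∀ v, t ≤ v → v ≤ u → StronglyMeasurable[m] (L v)) :
    StronglyMeasurable[m] (fun ω => runMax L t u ω) := by
  induction u, htu using Nat.le_induction with
  | base => simpa using hL t le_rfl le_rfl
  | succ u htu ih =>
    rw [runMax_succ_eq_sup htu]
    exact (ih fun v hv₁ hv₂ => hL v hv₁ (by omega)).sup (hL (u + 1) (by omega) le_rfl)

lemma memLp_runMax {m : MeasurableSpace Ω} {μ : Measure Ω} {p : ENNReal} (htu : t ≤ u)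
    (hL : ∀ v, t ≤ v → v ≤ u → MemLp (L v) p μ) : MemLp (fun ω => runMax L t u ω) p μ := by
  induction u, htu using Nat.le_induction with
  | base => simpa using hL t le_rfl le_rfl
  | succ u htu ih =>
    rw [runMax_succ_eq_sup htu]
    exact (ih fun v hv₁ hv₂ => hL v hv₁ (by omega)).sup (hL (u + 1) (by omega) le_rfl)

end RunMax

section StoppedValues
variable {Ω : Type*} {m0 : MeasurableSpace Ω} {μ : Measure Ω}

lemma stronglyMeasurable_sum_Ico {F : Filtration ℕ m0} {c : ℕ → Ω → ℝ} {a b : ℕ}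
    (hc : ∀ u, a ≤ u → u < b → StronglyMeasurable[F u] (c u)) :
    StronglyMeasurable[F b] (fun ω => ∑ u ∈ Finset.Ico a b, c u ω) :=
  Finset.stronglyMeasurable_fun_sum _ fun u hu =>
    (hc u (Finset.mem_Ico.1 hu).1 (Finset.mem_Ico.1 hu).2).mono (F.mono (Finset.mem_Ico.1 hu).2.le)

lemma measurableSet_find_eq {m : MeasurableSpace Ω} {p : ℕ → Ω → Prop}
    [∀ n ω, Decidable (p n ω)] (h : ∀ ω, ∃ n, p n ω) {s : ℕ}
    (hp : ∀ n, n ≤ s → MeasurableSet[m] {ω | p n ω}) :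
    MeasurableSet[m] {ω | Nat.find (h ω) = s} := by
  simp only [Nat.find_eq_iff, Set.ofPred_and, Set.ofPred_forall]
  exact (hp s le_rfl).inter <| MeasurableSet.iInter fun n => MeasurableSet.iInter fun hn =>
    (hp n hn.le).compl

variable {σ : Ω → ℕ} {a b : ℕ}

lemma stopped_eq_sum_indicator (hσ : ∀ ω, σ ω ∈ Finset.Icc a b) (f : ℕ → Ω → ℝ) :
    (fun ω => f (σ ω) ω) = ∑ s ∈ Finset.Icc a b, {ω | σ ω = s}.indicator (f s) := by
  funext ω
  rw [Finset.sum_apply, Finset.sum_eq_single_of_mem (σ ω) (hσ ω)]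
  · exact (Set.indicator_of_mem (s := {ω | σ ω = σ ω}) rfl _).symm
  · exact fun s _ hs => Set.indicator_of_notMem (s := {ω | σ ω = s}) (Ne.symm hs) _

lemma stronglyMeasurable_stopped {m : MeasurableSpace Ω} (hσ : ∀ ω, σ ω ∈ Finset.Icc a b)
    (hσm : ∀ s, a ≤ s → s ≤ b → MeasurableSet[m] {ω | σ ω = s}) {f : ℕ → Ω → ℝ}
    (hf : ∀ s, a ≤ s → s ≤ b → StronglyMeasurable[m] (f s)) :
    StronglyMeasurable[m] (fun ω => f (σ ω) ω) := by
  rw [stopped_eq_sum_indicator hσ]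
  exact Finset.stronglyMeasurable_sum _ fun s hs =>
    (hf s (Finset.mem_Icc.1 hs).1 (Finset.mem_Icc.1 hs).2).indicator
      (hσm s (Finset.mem_Icc.1 hs).1 (Finset.mem_Icc.1 hs).2)

lemma memLp_stopped {p : ENNReal} (hσ : ∀ ω, σ ω ∈ Finset.Icc a b)
    (hσm : ∀ s, a ≤ s → s ≤ b → MeasurableSet {ω | σ ω = s}) {f : ℕ → Ω → ℝ}
    (hf : ∀ s, a ≤ s → s ≤ b → MemLp (f s) p μ) :
    MemLp (fun ω => f (σ ω) ω) p μ := by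
  rw [stopped_eq_sum_indicator hσ]
  exact memLp_finsetSum' _ fun s hs =>
    (hf s (Finset.mem_Icc.1 hs).1 (Finset.mem_Icc.1 hs).2).indicator
      (hσm s (Finset.mem_Icc.1 hs).1 (Finset.mem_Icc.1 hs).2)

lemma stronglyMeasurable_stopped_of_adapted {F : Filtration ℕ m0} (hσ : ∀ ω, σ ω ∈ Finset.Icc a b)
    (hσm : ∀ s, s ≤ b → MeasurableSet[F s] {ω | σ ω = s}) {f : ℕ → Ω → ℝ}
    (hf : ∀ s, a ≤ s → s ≤ b → StronglyMeasurable[F s] (f s)) :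
    StronglyMeasurable[F b] (fun ω => f (σ ω) ω) :=
  stronglyMeasurable_stopped hσ (fun s _ hsb => F.mono hsb _ (hσm s hsb))
    fun s has hsb => (hf s has hsb).mono (F.mono hsb)

lemma ae_stopped {P : ℕ → Ω → Prop} (hσ : ∀ ω, σ ω ∈ Finset.Icc a b)
    (h : ∀ s, a ≤ s → s ≤ b → ∀ᵐ ω ∂μ, σ ω = s → P s ω) : ∀ᵐ ω ∂μ, P (σ ω) ω := by
  have h' : ∀ᵐ ω ∂μ, ∀ s ∈ Finset.Icc a b, σ ω = s → P s ω :=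
    (eventually_all_finset _).2 fun s hs =>
      h s (Finset.mem_Icc.1 hs).1 (Finset.mem_Icc.1 hs).2
  filter_upwards [h'] with ω hω using hω (σ ω) (hσ ω) rfl

end StoppedValues

namespace NLExp
variable {Ω : Type*} {m0 : MeasurableSpace Ω} {μ : Measure Ω} {F : Filtration ℕ m0} {N : ℕ}
  (EE : NLExp μ F N) {t : ℕ}

lemma E_congr (ht : t ≤ N) {ξ η : Ω → ℝ} (hξm : StronglyMeasurable[F N] ξ) (hξp : MemLp ξ 2 μ)
    (hηm : StronglyMeasurable[F N] η) (hηp : MemLp η 2 μ) (h : ξ =ᵐ[μ] η) :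
    EE.E t ξ =ᵐ[μ] EE.E t η := by
  filter_upwards [EE.mono t ht ξ η hξm hξp hηm hηp h.le,
    EE.mono t ht η ξ hηm hηp hξm hξp h.symm.le] with ω h₁ h₂ using le_antisymm h₁ h₂

lemma E_zero (ht : t ≤ N) : EE.E t 0 =ᵐ[μ] 0 := by
  have h0m : StronglyMeasurable[F N] (0 : Ω → ℝ) := stronglyMeasurable_zero
  have h0p : MemLp (0 : Ω → ℝ) 2 μ := MemLp.zero
  have htrans := EE.translation t ht 0 (EE.E t 0) h0m h0p (EE.adapted t ht 0 h0m h0p)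
    (EE.sqInt t ht 0 h0m h0p)
  rw [zero_add] at htrans
  filter_upwards [htrans, EE.tower t t le_rfl ht 0 h0m h0p] with ω h₁ h₂
  simp only [Pi.add_apply, Pi.zero_apply] at h₁ ⊢
  linarith

lemma E_of_stronglyMeasurable (ht : t ≤ N) {ξ : Ω → ℝ} (hξm : StronglyMeasurable[F t] ξ)
    (hξp : MemLp ξ 2 μ) : EE.E t ξ =ᵐ[μ] ξ := by
  have htrans := EE.translation t ht 0 ξ stronglyMeasurable_zero MemLp.zero hξm hξp
  rw [zero_add] at htrans
  filter_upwards [htrans, EE.E_zero ht] with ω h₁ h₂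
  simp [h₁, h₂]

lemma E_congr_of_E_congr {r : ℕ} (htr : t ≤ r) (hr : r ≤ N) {ξ η : Ω → ℝ}
    (hξm : StronglyMeasurable[F N] ξ) (hξp : MemLp ξ 2 μ)
    (hηm : StronglyMeasurable[F N] η) (hηp : MemLp η 2 μ) (h : EE.E r ξ =ᵐ[μ] EE.E r η) :
    EE.E t ξ =ᵐ[μ] EE.E t η :=
  (EE.tower t r htr hr ξ hξm hξp).symm.trans <|
    (EE.E_congr (htr.trans hr) ((EE.adapted r hr ξ hξm hξp).mono (F.mono hr))
      (EE.sqInt r hr ξ hξm hξp) ((EE.adapted r hr η hηm hηp).mono (F.mono hr))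
      (EE.sqInt r hr η hηm hηp) h).trans (EE.tower t r htr hr η hηm hηp)

lemma E_piecewise_congr (ht : t ≤ N) {A : Set Ω} (hA : MeasurableSet[F t] A) {ξ η ζ : Ω → ℝ}
    (hξm : StronglyMeasurable[F N] ξ) (hξp : MemLp ξ 2 μ)
    (hηm : StronglyMeasurable[F N] η) (hηp : MemLp η 2 μ)
    (hζm : StronglyMeasurable[F N] ζ) (hζp : MemLp ζ 2 μ)
    (h : ∀ᵐ ω ∂μ, ω ∈ A → EE.E t ξ ω = EE.E t η ω) :
    EE.E t (A.indicator ξ + Aᶜ.indicator ζ) =ᵐ[μ] EE.E t (A.indicator η + Aᶜ.indicator ζ) := by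
  filter_upwards [EE.zeroOne t ht ξ ζ hξm hξp hζm hζp A hA,
    EE.zeroOne t ht η ζ hηm hηp hζm hζp A hA, h] with ω h₁ h₂ h₃
  rw [h₁, h₂]
  by_cases hω : ω ∈ A <;> simp [hω, h₃]

lemma measure_eq_zero_of_lt_of_E_le (ht : t ≤ N) {ξ η : Ω → ℝ}
    (hξm : StronglyMeasurable[F N] ξ) (hξp : MemLp ξ 2 μ)
    (hηm : StronglyMeasurable[F N] η) (hηp : MemLp η 2 μ) {B : Set Ω} (hB : MeasurableSet[F t] B)
    (hlt : ∀ᵐ ω ∂μ, ω ∈ B → ξ ω < η ω) (hE : ∀ᵐ ω ∂μ, ω ∈ B → EE.E t η ω ≤ EE.E t ξ ω) :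
    μ B = 0 := by
  by_contra hB₀
  set W := B.indicator η + Bᶜ.indicator ξ with hW
  have hWm : StronglyMeasurable[F N] W :=
    (hηm.indicator (F.mono ht _ hB)).add (hξm.indicator (F.mono ht _ hB).compl)
  have hWp : MemLp W 2 μ := (hηp.indicator (F.le t _ hB)).add (hξp.indicator (F.le t _ hB).compl)
  have hξW : ξ ≤ᵐ[μ] W := by
    filter_upwards [hlt] with ω h
    by_cases hω : ω ∈ B <;> simp [W, hω, (h _).le]
  have hξW_pos : 0 < μ {ω | ξ ω < W ω} := by
    refine (pos_iff_ne_zero.2 hB₀).trans_le (measure_mono_ae ?_)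
    filter_upwards [hlt] with ω h hω
    show ξ ω < W ω
    rw [hW, Pi.add_apply, Set.indicator_of_mem hω,
      Set.indicator_of_notMem (Set.notMem_compl_iff.2 hω), add_zero]
    exact h hω
  have hEW : ∀ᵐ ω ∂μ, ¬ EE.E t ξ ω < EE.E t W ω := by
    filter_upwards [EE.zeroOne t ht η ξ hηm hηp hξm hξp B hB, hE] with ω h₁ h₂
    rw [h₁]
    by_cases hω : ω ∈ B <;> simp [hω, h₂]
  exact (EE.strictMono t ht ξ W hξm hξp hWm hWp hξW hξW_pos).ne'
    (measure_eq_zero_iff_ae_notMem.2 hEW)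

section OptionalStopping
variable {σ : Ω → ℕ} {Y : ℕ → Ω → ℝ} {ξ : Ω → ℝ}

def stoppedBefore (σ : Ω → ℕ) (Y : ℕ → Ω → ℝ) (ξ : Ω → ℝ) (r : ℕ) (ω : Ω) : ℝ :=
  if σ ω < r then Y (σ ω) ω else ξ ω

lemma stoppedBefore_eq_stopped (r : ℕ) :
    stoppedBefore σ Y ξ r = fun ω => (fun s => if s < r then Y s else ξ) (σ ω) ω :=
  funext fun ω => by simp only [stoppedBefore]; split_ifs <;> rfl

lemma stoppedBefore_eq_piecewise (r : ℕ) :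
    stoppedBefore σ Y ξ r =
      {ω | σ ω = r}.indicator ξ + {ω | σ ω = r}ᶜ.indicator (stoppedBefore σ Y ξ (r + 1)) := by
  funext ω
  by_cases hω : σ ω = r
  · simp [stoppedBefore, hω]
  · have : σ ω < r ↔ σ ω < r + 1 := by omega
    simp [stoppedBefore, hω, this]

lemma stoppedBefore_succ_eq_piecewise (r : ℕ) :
    stoppedBefore σ Y ξ (r + 1) =
      {ω | σ ω = r}.indicator (Y r) + {ω | σ ω = r}ᶜ.indicator (stoppedBefore σ Y ξ (r + 1)) := by
  funext ω
  by_cases hω : σ ω = r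
  · simp [stoppedBefore, hω]
  · simp [hω]

lemma E_stoppedBefore_succ {r : ℕ} (hr : r ≤ N) (hσr : MeasurableSet[F r] {ω | σ ω = r})
    (hξm : StronglyMeasurable[F N] ξ) (hξp : MemLp ξ 2 μ)
    (hYm : StronglyMeasurable[F r] (Y r)) (hYp : MemLp (Y r) 2 μ)
    (hHm : StronglyMeasurable[F N] (stoppedBefore σ Y ξ (r + 1)))
    (hHp : MemLp (stoppedBefore σ Y ξ (r + 1)) 2 μ)
    (hY : ∀ᵐ ω ∂μ, σ ω = r → EE.E r ξ ω = Y r ω) :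
    EE.E r (stoppedBefore σ Y ξ (r + 1)) =ᵐ[μ] EE.E r (stoppedBefore σ Y ξ r) := by
  rw [stoppedBefore_eq_piecewise r]
  nth_rewrite 1 [stoppedBefore_succ_eq_piecewise r]
  refine EE.E_piecewise_congr hr hσr (hYm.mono (F.mono hr)) hYp hξm hξp hHm hHp ?_
  filter_upwards [EE.E_of_stronglyMeasurable hr hYm hYp, hY] with ω h₁ h₂ hω
  rw [h₁, h₂ hω]

lemma E_stopped (ht : t ≤ N) (hσ : ∀ ω, σ ω ∈ Finset.Icc t N)
    (hσm : ∀ s, s ≤ N → MeasurableSet[F s] {ω | σ ω = s})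
    (hξm : StronglyMeasurable[F N] ξ) (hξp : MemLp ξ 2 μ)
    (hYm : ∀ s, t ≤ s → s ≤ N → StronglyMeasurable[F s] (Y s))
    (hYp : ∀ s, t ≤ s → s ≤ N → MemLp (Y s) 2 μ)
    (hY : ∀ s, t ≤ s → s ≤ N → ∀ᵐ ω ∂μ, σ ω = s → EE.E s ξ ω = Y s ω) :
    EE.E t (fun ω => Y (σ ω) ω) =ᵐ[μ] EE.E t ξ := by
  have hHm : ∀ r, StronglyMeasurable[F N] (stoppedBefore σ Y ξ r) := fun r => by
    rw [stoppedBefore_eq_stopped r]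
    exact stronglyMeasurable_stopped (f := fun s => if s < r then Y s else ξ) hσ
      (fun s _ hsN => F.mono hsN _ (hσm s hsN))
      fun s hts hsN => by split_ifs; exacts [(hYm s hts hsN).mono (F.mono hsN), hξm]
  have hHp : ∀ r, MemLp (stoppedBefore σ Y ξ r) 2 μ := fun r => by
    rw [stoppedBefore_eq_stopped r]
    exact memLp_stopped (f := fun s => if s < r then Y s else ξ) hσ
      (fun s _ hsN => F.le s _ (hσm s hsN))
      fun s hts hsN => by split_ifs; exacts [hYp s hts hsN, hξp]
  have telescope : ∀ r, t ≤ r → r ≤ N + 1 →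
      EE.E t (stoppedBefore σ Y ξ r) =ᵐ[μ] EE.E t (stoppedBefore σ Y ξ t) := by
    intro r htr
    induction r, htr using Nat.le_induction with
    | base => exact fun _ => EventuallyEq.rfl
    | succ r htr ih =>
      refine fun hr => .trans ?_ (ih (by omega))
      refine EE.E_congr_of_E_congr htr (by omega) (hHm _) (hHp _) (hHm _) (hHp _) ?_
      exact EE.E_stoppedBefore_succ (by omega) (hσm r (by omega)) hξm hξp (hYm r htr (by omega))
        (hYp r htr (by omega)) (hHm _) (hHp _) (hY r htr (by omega))
  have hH_last : stoppedBefore σ Y ξ (N + 1) = fun ω => Y (σ ω) ω :=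
    funext fun ω => if_pos (Nat.lt_succ_of_le (Finset.mem_Icc.1 (hσ ω)).2)
  have hH_first : stoppedBefore σ Y ξ t = ξ :=
    funext fun ω => if_neg (not_lt.2 (Finset.mem_Icc.1 (hσ ω)).1)
  simpa only [hH_last, hH_first] using telescope (N + 1) (by omega) le_rfl

end OptionalStopping

end NLExp

section SquareIntegrability
variable {Ω : Type*} {m0 : MeasurableSpace Ω} {μ : Measure Ω} {p : ENNReal} {L : ℕ → Ω → ℝ}
  {N : ℕ}

lemma memLp_of_le_of_le {p : ENNReal} {f g h : Ω → ℝ} (hg : MemLp g p μ) (hh : MemLp h p μ)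
    (hf : AEStronglyMeasurable f μ) (hgf : ∀ ω, g ω ≤ f ω) (hfh : ∀ ω, f ω ≤ h ω) :
    MemLp f p μ :=
  (hg.abs.sup hh.abs).of_le hf <| ae_of_all _ fun ω => by
    simpa [abs_of_nonneg (le_max_of_le_left (abs_nonneg (g ω)))]
      using abs_le_max_abs_abs (hgf ω) (hfh ω)

lemma memLp_of_memLp_sum_runMax_succ {k : ℕ} (hk : k + 1 < N)
    (hLk : AEStronglyMeasurable (L k) μ)
    (hS : MemLp (fun ω => ∑ u ∈ Finset.Ico k N, runMax L k u ω) p μ)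
    (hS' : MemLp (fun ω => ∑ u ∈ Finset.Ico (k + 1) N, runMax L (k + 1) u ω) p μ)
    (hL : ∀ v, k < v → v < N → MemLp (L v) p μ) : MemLp (L k) p μ := by
  have hsplit : ∀ ω, ∑ u ∈ Finset.Ico k N, runMax L k u ω =
      L k ω + ∑ u ∈ Finset.Ico (k + 1) N, max (L k ω) (runMax L (k + 1) u ω) := fun ω => by
    rw [Finset.sum_eq_sum_Ico_succ_bot (by omega), runMax_self]
    exact congrArg _ (Finset.sum_congr rfl fun u hu =>
      runMax_eq_max_runMax_succ (Finset.mem_Ico.1 hu).1)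
  set U := fun ω => ∑ u ∈ Finset.Ico k N, runMax L k u ω -
    ∑ u ∈ Finset.Ico (k + 1) N, runMax L (k + 1) u ω
  have hLU : ∀ ω, L k ω ≤ U ω := fun ω => by
    have := Finset.sum_le_sum fun u (_ : u ∈ Finset.Ico (k + 1) N) =>
      le_max_right (L k ω) (runMax L (k + 1) u ω)
    linarith [hsplit ω]
  set V := fun ω => ∑ u ∈ Finset.Ico k N, runMax L k u ω -
    ∑ u ∈ Finset.Ico (k + 1) N, max (U ω) (runMax L (k + 1) u ω)
  have hVL : ∀ ω, V ω ≤ L k ω := fun ω => by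
    have := Finset.sum_le_sum fun u (_ : u ∈ Finset.Ico (k + 1) N) =>
      max_le_max (hLU ω) (le_refl (runMax L (k + 1) u ω))
    linarith [hsplit ω]
  have hU : MemLp U p μ := hS.sub hS'
  have hV : MemLp V p μ := hS.sub <| memLp_finsetSum _ fun u hu =>
    hU.sup <| memLp_runMax (Finset.mem_Ico.1 hu).1 fun v hv _ =>
      hL v (by omega) (by have := (Finset.mem_Ico.1 hu).2; omega)
  exact memLp_of_le_of_le hV hU hLk hVL hLU

lemma memLp_of_memLp_sum_runMax (hL : ∀ t, t < N → AEStronglyMeasurable (L t) μ)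
    (hS : ∀ t, t < N → MemLp (fun ω => ∑ u ∈ Finset.Ico t N, runMax L t u ω) p μ)
    {t : ℕ} (ht : t < N) : MemLp (L t) p μ := by
  suffices h : ∀ k, k ≤ N → ∀ v, k ≤ v → v < N → MemLp (L v) p μ from h t ht.le t le_rfl ht
  intro k hk
  induction hk using Nat.decreasingInduction with
  | self => intro v hv hv'; omega
  | of_succ k hk ih =>
    intro v hkv hvN
    rcases hkv.eq_or_lt with rfl | hkv
    · rcases (Nat.succ_le_of_lt hk).eq_or_lt with hkN | hkN
      · simpa [← hkN, Nat.Ico_succ_singleton] using hS k hk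
      · exact memLp_of_memLp_sum_runMax_succ hkN (hL k hk) (hS k hk) (hS (k + 1) hkN)
          fun v hkv hvN => ih v hkv hvN
    · exact ih v hkv hvN

end SquareIntegrability

section Skorokhod
variable {Ω : Type*} {m0 : MeasurableSpace Ω} {μ : Measure Ω} {F : Filtration ℕ m0} {N : ℕ}

-- The integrands in `hL_rep` and `hZ_def` are `runningCost (runMax L t) X t N` and
-- `runningCost ζ X t N`.
noncomputable def runningCost (c X : ℕ → Ω → ℝ) (t s : ℕ) (ω : Ω) : ℝ :=
  ∑ u ∈ Finset.Ico t s, c u ω + X s ω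

variable {c X : ℕ → Ω → ℝ} {t s : ℕ}

lemma stronglyMeasurable_runningCost (hc : ∀ u, t ≤ u → u < N → StronglyMeasurable[F u] (c u))
    (hX : ∀ s, s ≤ N → StronglyMeasurable[F s] (X s)) (hsN : s ≤ N) :
    StronglyMeasurable[F s] (runningCost c X t s) :=
  (stronglyMeasurable_sum_Ico fun u htu hus => hc u htu (by omega)).add (hX s hsN)

lemma memLp_sum_Ico (hc : ∀ u, t ≤ u → u < N → MemLp (c u) 2 μ) (hsN : s ≤ N) :
    MemLp (fun ω => ∑ u ∈ Finset.Ico t s, c u ω) 2 μ :=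
  memLp_finsetSum _ fun u hu => hc u (Finset.mem_Ico.1 hu).1 (by simp at hu; omega)

lemma memLp_runningCost (hc : ∀ u, t ≤ u → u < N → MemLp (c u) 2 μ)
    (hX : ∀ s, s ≤ N → MemLp (X s) 2 μ) (hsN : s ≤ N) : MemLp (runningCost c X t s) 2 μ :=
  (memLp_sum_Ico hc hsN).add (hX s hsN)

lemma runningCost_eq_add (hts : t ≤ s) (hsN : s ≤ N) :
    runningCost c X t N = runningCost c X s N + fun ω => ∑ u ∈ Finset.Ico t s, c u ω := by
  funext ω
  simp only [runningCost, Pi.add_apply, ← Finset.sum_Ico_consecutive _ hts hsN]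
  ring

lemma stronglyMeasurable_stopped_runningCost {σ : Ω → ℕ} (hσ : ∀ ω, σ ω ∈ Finset.Icc t N)
    (hσm : ∀ s, s ≤ N → MeasurableSet[F s] {ω | σ ω = s})
    (hc : ∀ u, t ≤ u → u < N → StronglyMeasurable[F u] (c u))
    (hX : ∀ s, s ≤ N → StronglyMeasurable[F s] (X s)) :
    StronglyMeasurable[F N] (fun ω => runningCost c X t (σ ω) ω) :=
  stronglyMeasurable_stopped_of_adapted hσ hσm fun _ _ hsN =>
    stronglyMeasurable_runningCost hc hX hsN

lemma memLp_stopped_runningCost {σ : Ω → ℕ} (hσ : ∀ ω, σ ω ∈ Finset.Icc t N)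
    (hσm : ∀ s, s ≤ N → MeasurableSet[F s] {ω | σ ω = s})
    (hc : ∀ u, t ≤ u → u < N → MemLp (c u) 2 μ) (hX : ∀ s, s ≤ N → MemLp (X s) 2 μ) :
    MemLp (fun ω => runningCost c X t (σ ω) ω) 2 μ :=
  memLp_stopped hσ (fun s _ hsN => F.le s _ (hσm s hsN)) fun _ _ hsN => memLp_runningCost hc hX hsN

lemma exists_firstIncrease (ht : t < N) {ζ : ℕ → Ω → ℝ}
    (hζ : ∀ s, s < N → StronglyMeasurable[F s] (ζ s)) :
    ∃ σ : Ω → ℕ, (∀ ω, σ ω ∈ Finset.Ioc t N) ∧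
      (∀ s, s ≤ N → MeasurableSet[F s] {ω | σ ω = s}) ∧
      (∀ ω u, t ≤ u → u < σ ω → ζ u ω ≤ ζ t ω) ∧ (∀ ω, σ ω < N → ζ t ω < ζ (σ ω) ω) := by
  classical
  have hex : ∀ ω, ∃ u, t < u ∧ (u = N ∨ ζ t ω < ζ u ω) := fun _ => ⟨N, ht, Or.inl rfl⟩
  refine ⟨fun ω => Nat.find (hex ω), fun ω => Finset.mem_Ioc.2
    ⟨(Nat.find_spec (hex ω)).1, Nat.find_min' _ ⟨ht, Or.inl rfl⟩⟩, fun s hsN => ?_,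
    fun ω u htu hu => ?_, fun ω hσ => (Nat.find_spec (hex ω)).2.resolve_left hσ.ne⟩
  · refine measurableSet_find_eq hex fun n hns => ?_
    by_cases hn : t < n ∧ n < N
    · have hset : {ω | t < n ∧ (n = N ∨ ζ t ω < ζ n ω)} = {ω | ζ t ω < ζ n ω} := by
        ext ω; simp [hn.1, hn.2.ne]
      rw [hset]
      exact measurableSet_lt ((hζ t ht).mono (F.mono (by omega))).measurable
        ((hζ n hn.2).mono (F.mono hns)).measurable
    · have hset : {ω | t < n ∧ (n = N ∨ ζ t ω < ζ n ω)} = {_ω | t < n ∧ n = N} := by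
        ext ω
        simp only [Set.mem_ofPred_eq]
        constructor
        · rintro ⟨h₁, h₂ | h₂⟩
          exacts [⟨h₁, h₂⟩, ⟨h₁, by omega⟩]
        · rintro ⟨h₁, h₂⟩
          exact ⟨h₁, Or.inl h₂⟩
      rw [hset]
      exact MeasurableSet.const _
  · rcases htu.eq_or_lt with rfl | htu
    · exact le_rfl
    · exact not_lt.1 fun h => Nat.find_min (hex ω) hu ⟨htu, Or.inr h⟩

variable (EE : NLExp μ F N) {L ζ Z : ℕ → Ω → ℝ}

lemma E_runningCost_self (hXm : StronglyMeasurable[F N] (X N)) (hXp : MemLp (X N) 2 μ) :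
    EE.E N (runningCost c X N N) =ᵐ[μ] X N := by
  have : runningCost c X N N = X N := funext fun ω => by simp [runningCost]
  rw [this]
  exact EE.E_of_stronglyMeasurable le_rfl hXm hXp

lemma E_add_sum_ae_eq_runningCost (hc : ∀ u, t ≤ u → u < N → StronglyMeasurable[F u] (c u))
    (hcp : ∀ u, t ≤ u → u < N → MemLp (c u) 2 μ) {R : Ω → ℝ} (hRm : StronglyMeasurable[F N] R)
    (hRp : MemLp R 2 μ) (hsN : s ≤ N) :
    ∀ᵐ ω ∂μ, EE.E s R ω = X s ω →
      EE.E s (R + fun ω => ∑ u ∈ Finset.Ico t s, c u ω) ω = runningCost c X t s ω := by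
  filter_upwards [EE.translation s hsN _ _ hRm hRp
    (stronglyMeasurable_sum_Ico fun u htu hus => hc u htu (by omega)) (memLp_sum_Ico hcp hsN)]
    with ω h hR
  rw [h, Pi.add_apply, hR, runningCost, add_comm]

lemma E_stopped_runningCost_eq (hX_adapted : ∀ s, s ≤ N → StronglyMeasurable[F s] (X s))
    (hX_sqInt : ∀ s, s ≤ N → MemLp (X s) 2 μ)
    (hζ_adapted : ∀ u, u < N → StronglyMeasurable[F u] (ζ u))
    (hζ_sqInt : ∀ u, u < N → MemLp (ζ u) 2 μ)
    (hZ_def : ∀ s, s < N → Z s = EE.E s (runningCost ζ X s N)) (ht : t < N) {σ : Ω → ℕ}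
    (hσ : ∀ ω, σ ω ∈ Finset.Icc t N) (hσm : ∀ s, s ≤ N → MeasurableSet[F s] {ω | σ ω = s})
    (hflat : ∀ᵐ ω ∂μ, σ ω < N → Z (σ ω) ω = X (σ ω) ω) :
    EE.E t (fun ω => runningCost ζ X t (σ ω) ω) =ᵐ[μ] Z t := by
  have hm : ∀ a s, s ≤ N → StronglyMeasurable[F s] (runningCost ζ X a s) := fun a s =>
    stronglyMeasurable_runningCost (fun u _ hu => hζ_adapted u hu) hX_adapted
  have hp : ∀ a s, s ≤ N → MemLp (runningCost ζ X a s) 2 μ := fun a s =>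
    memLp_runningCost (fun u _ hu => hζ_sqInt u hu) hX_sqInt
  rw [hZ_def t ht]
  refine EE.E_stopped ht.le hσ hσm (hm t N le_rfl) (hp t N le_rfl) (fun s _ => hm t s)
    (fun s _ => hp t s) fun s hts hsN => ?_
  have htail : ∀ᵐ ω ∂μ, σ ω = s → EE.E s (runningCost ζ X s N) ω = X s ω := by
    rcases hsN.lt_or_eq with hsN | rfl
    · filter_upwards [hflat] with ω hflat hσs
      subst hσs
      exact (congrFun (hZ_def _ hsN) ω).symm.trans (hflat hsN)
    · filter_upwards [E_runningCost_self EE (hX_adapted s le_rfl) (hX_sqInt s le_rfl)]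
        with ω h _ using h
  rw [runningCost_eq_add hts hsN]
  filter_upwards [E_add_sum_ae_eq_runningCost EE (fun u _ hu => hζ_adapted u hu)
    (fun u _ hu => hζ_sqInt u hu) (hm s N le_rfl) (hp s N le_rfl) hsN, htail] with ω h₁ h₂ hσs
  exact h₁ (h₂ hσs)

lemma runningCost_runMax_ae_le_E (hX_adapted : ∀ s, s ≤ N → StronglyMeasurable[F s] (X s))
    (hX_sqInt : ∀ s, s ≤ N → MemLp (X s) 2 μ)
    (hM_adapted : ∀ s u, s ≤ u → u < N → StronglyMeasurable[F u] (fun ω => runMax L s u ω))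
    (hM_sqInt : ∀ s u, s ≤ u → u < N → MemLp (fun ω => runMax L s u ω) 2 μ)
    (hL_rep : ∀ s, s < N → X s =ᵐ[μ] EE.E s (runningCost (runMax L s) X s N))
    (hts : t ≤ s) (hsN : s ≤ N) :
    runningCost (runMax L t) X t s ≤ᵐ[μ] EE.E s (runningCost (runMax L t) X t N) := by
  have hm : ∀ a, StronglyMeasurable[F N] (runningCost (runMax L a) X a N) := fun a =>
    stronglyMeasurable_runningCost (hM_adapted a) hX_adapted le_rfl
  have hp : ∀ a, MemLp (runningCost (runMax L a) X a N) 2 μ := fun a =>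
    memLp_runningCost (hM_sqInt a) hX_sqInt le_rfl
  have htail : EE.E s (runningCost (runMax L s) X s N) =ᵐ[μ] X s := by
    rcases hsN.lt_or_eq with hsN | rfl
    · exact (hL_rep s hsN).symm
    · exact E_runningCost_self EE (hX_adapted s le_rfl) (hX_sqInt s le_rfl)
  have hle : runningCost (runMax L s) X s N + (fun ω => ∑ u ∈ Finset.Ico t s, runMax L t u ω)
      ≤ runningCost (runMax L t) X t N := fun ω => by
    rw [runningCost_eq_add hts hsN]
    simp only [Pi.add_apply, runningCost, add_le_add_iff_right]
    exact Finset.sum_le_sum fun u hu => runMax_anti_left hts (Finset.mem_Ico.1 hu).1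
  have hsum_m : StronglyMeasurable[F N] (fun ω => ∑ u ∈ Finset.Ico t s, runMax L t u ω) :=
    (stronglyMeasurable_sum_Ico fun u htu hus => hM_adapted t u htu (by omega)).mono (F.mono hsN)
  have hmono := EE.mono s hsN _ _ ((hm s).add hsum_m) ((hp s).add (memLp_sum_Ico (hM_sqInt t) hsN))
    (hm t) (hp t) (ae_of_all _ hle)
  filter_upwards [E_add_sum_ae_eq_runningCost EE (hM_adapted t) (hM_sqInt t) (hm s) (hp s) hsN,
    htail, hmono] with ω h₁ h₂ h₃
  exact (h₁ h₂).symm.trans_le h₃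

lemma E_stopped_runningCost_runMax_le (hX_adapted : ∀ s, s ≤ N → StronglyMeasurable[F s] (X s))
    (hX_sqInt : ∀ s, s ≤ N → MemLp (X s) 2 μ)
    (hM_adapted : ∀ s u, s ≤ u → u < N → StronglyMeasurable[F u] (fun ω => runMax L s u ω))
    (hM_sqInt : ∀ s u, s ≤ u → u < N → MemLp (fun ω => runMax L s u ω) 2 μ)
    (hL_rep : ∀ s, s < N → X s =ᵐ[μ] EE.E s (runningCost (runMax L s) X s N)) (ht : t < N)
    {σ : Ω → ℕ} (hσ : ∀ ω, σ ω ∈ Finset.Icc t N)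
    (hσm : ∀ s, s ≤ N → MeasurableSet[F s] {ω | σ ω = s}) :
    ∀ᵐ ω ∂μ, EE.E t (fun ω => runningCost (runMax L t) X t (σ ω) ω) ω ≤ X t ω := by
  set η := runningCost (runMax L t) X t N
  have hηm : StronglyMeasurable[F N] η :=
    stronglyMeasurable_runningCost (hM_adapted t) hX_adapted le_rfl
  have hηp : MemLp η 2 μ := memLp_runningCost (hM_sqInt t) hX_sqInt le_rfl
  have hEm : ∀ s, t ≤ s → s ≤ N → StronglyMeasurable[F s] (EE.E s η) :=
    fun s _ hsN => EE.adapted s hsN η hηm hηp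
  have hEp : ∀ s, t ≤ s → s ≤ N → MemLp (EE.E s η) 2 μ := fun s _ hsN => EE.sqInt s hsN η hηm hηp
  have hle : ∀ᵐ ω ∂μ, runningCost (runMax L t) X t (σ ω) ω ≤ EE.E (σ ω) η ω :=
    ae_stopped hσ fun s hts hsN => (runningCost_runMax_ae_le_E EE hX_adapted hX_sqInt
      hM_adapted hM_sqInt hL_rep hts hsN).mono fun ω h _ => h
  have hmono := EE.mono t ht.le _ _
    (stronglyMeasurable_stopped_runningCost hσ hσm (hM_adapted t) hX_adapted)
    (memLp_stopped_runningCost hσ hσm (hM_sqInt t) hX_sqInt)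
    (stronglyMeasurable_stopped_of_adapted hσ hσm hEm)
    (memLp_stopped hσ (fun s _ hsN => F.le s _ (hσm s hsN)) hEp) hle
  have hstop := EE.E_stopped ht.le hσ hσm hηm hηp hEm hEp fun s _ _ => ae_of_all _ fun _ _ => rfl
  filter_upwards [hmono, hstop, hL_rep t ht] with ω h₁ h₂ h₃
  rw [h₃, ← h₂]
  exact h₁

lemma ae_L_le_ζ_of_dominates (hX_adapted : ∀ s, s ≤ N → StronglyMeasurable[F s] (X s))
    (hX_sqInt : ∀ s, s ≤ N → MemLp (X s) 2 μ)
    (hL_adapted : ∀ u, u < N → StronglyMeasurable[F u] (L u))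
    (hM_adapted : ∀ s u, s ≤ u → u < N → StronglyMeasurable[F u] (fun ω => runMax L s u ω))
    (hM_sqInt : ∀ s u, s ≤ u → u < N → MemLp (fun ω => runMax L s u ω) 2 μ)
    (hL_rep : ∀ s, s < N → X s =ᵐ[μ] EE.E s (runningCost (runMax L s) X s N))
    (hζ_adapted : ∀ u, u < N → StronglyMeasurable[F u] (ζ u))
    (hζ_sqInt : ∀ u, u < N → MemLp (ζ u) 2 μ)
    (hZ_def : ∀ s, s < N → Z s = EE.E s (runningCost ζ X s N))
    (hZ_flat : ∀ᵐ ω ∂μ, ∀ s, s < N → (s = 0 ∨ ζ (s - 1) ω < ζ s ω) → Z s ω = X s ω)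
    (ht : t < N) (hZ_dom : X t ≤ᵐ[μ] Z t) : ∀ᵐ ω ∂μ, L t ω ≤ ζ t ω := by
  obtain ⟨σ, hσ, hσm, hσ_flat, hσ_incr⟩ := exists_firstIncrease ht hζ_adapted
  have hσ' : ∀ ω, σ ω ∈ Finset.Icc t N := fun ω => Finset.Ioc_subset_Icc_self (hσ ω)
  have hZ_flat_σ : ∀ᵐ ω ∂μ, σ ω < N → Z (σ ω) ω = X (σ ω) ω := by
    filter_upwards [hZ_flat] with ω hflat hσN
    have := Finset.mem_Ioc.1 (hσ ω)
    exact hflat _ hσN (Or.inr ((hσ_flat ω _ (by omega) (by omega)).trans_lt (hσ_incr ω hσN)))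
  have hlt : ∀ ω, ζ t ω < L t ω →
      runningCost ζ X t (σ ω) ω < runningCost (runMax L t) X t (σ ω) ω := fun ω hω => by
    have hσω := Finset.mem_Ioc.1 (hσ ω)
    have := Finset.sum_lt_sum_of_nonempty (Finset.nonempty_Ico.2 hσω.1) fun u hu =>
      ((hσ_flat ω u (Finset.mem_Ico.1 hu).1 (Finset.mem_Ico.1 hu).2).trans_lt hω).trans_le
        (le_runMax (L := L) le_rfl (Finset.mem_Ico.1 hu).1)
    unfold runningCost
    linarith
  have hB := EE.measure_eq_zero_of_lt_of_E_le ht.le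
    (stronglyMeasurable_stopped_runningCost hσ' hσm (fun u _ hu => hζ_adapted u hu) hX_adapted)
    (memLp_stopped_runningCost hσ' hσm (fun u _ hu => hζ_sqInt u hu) hX_sqInt)
    (stronglyMeasurable_stopped_runningCost hσ' hσm (hM_adapted t) hX_adapted)
    (memLp_stopped_runningCost hσ' hσm (hM_sqInt t) hX_sqInt)
    (measurableSet_lt (hζ_adapted t ht).measurable (hL_adapted t ht).measurable)
    (ae_of_all _ hlt) <| by
      filter_upwards [E_stopped_runningCost_runMax_le EE hX_adapted hX_sqInt hM_adapted hM_sqInt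
        hL_rep ht hσ' hσm, hZ_dom, E_stopped_runningCost_eq EE hX_adapted hX_sqInt hζ_adapted
        hζ_sqInt hZ_def ht hσ' hσm hZ_flat_σ] with ω h₁ h₂ h₃ _
      exact h₃ ▸ h₁.trans h₂
  filter_upwards [measure_eq_zero_iff_ae_notMem.1 hB] with ω hω using not_lt.1 hω

lemma ae_ζ_le_L_of_flat (hX_adapted : ∀ s, s ≤ N → StronglyMeasurable[F s] (X s))
    (hX_sqInt : ∀ s, s ≤ N → MemLp (X s) 2 μ)
    (hL_adapted : ∀ u, u < N → StronglyMeasurable[F u] (L u))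
    (hM_adapted : ∀ s u, s ≤ u → u < N → StronglyMeasurable[F u] (fun ω => runMax L s u ω))
    (hM_sqInt : ∀ s u, s ≤ u → u < N → MemLp (fun ω => runMax L s u ω) 2 μ)
    (hζ_adapted : ∀ u, u < N → StronglyMeasurable[F u] (ζ u))
    (hζ_sqInt : ∀ u, u < N → MemLp (ζ u) 2 μ) (ht : t < N)
    (hL_rep : X t =ᵐ[μ] EE.E t (runningCost (runMax L t) X t N))
    (hZ_def : Z t = EE.E t (runningCost ζ X t N))
    (hZ_flat : ∀ᵐ ω ∂μ, (t = 0 ∨ ζ (t - 1) ω < ζ t ω) → Z t ω = X t ω)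
    (hM_le : ∀ᵐ ω ∂μ, ∀ u, t ≤ u → u < N → runMax L t u ω ≤ ζ u ω) :
    ∀ᵐ ω ∂μ, (t = 0 ∨ ζ (t - 1) ω < ζ t ω) → ζ t ω ≤ L t ω := by
  set C := {ω | (t = 0 ∨ ζ (t - 1) ω < ζ t ω) ∧ L t ω < ζ t ω}
  have hC : MeasurableSet[F t] C := by
    refine MeasurableSet.inter ?_
      (measurableSet_lt (hL_adapted t ht).measurable (hζ_adapted t ht).measurable)
    rcases Nat.eq_zero_or_pos t with rfl | ht₀
    · simp only [true_or]
      exact MeasurableSet.univ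
    · simp only [ht₀.ne', false_or]
      exact measurableSet_lt ((hζ_adapted (t - 1) (by omega)).mono (F.mono (by omega))).measurable
        (hζ_adapted t ht).measurable
  have hlt : ∀ᵐ ω ∂μ, ω ∈ C → runningCost (runMax L t) X t N ω < runningCost ζ X t N ω := by
    filter_upwards [hM_le] with ω h hω
    have := Finset.sum_lt_sum (fun u hu => h u (Finset.mem_Ico.1 hu).1 (Finset.mem_Ico.1 hu).2)
      ⟨t, Finset.mem_Ico.2 ⟨le_rfl, ht⟩, (runMax_self (L := L)).trans_lt hω.2⟩
    unfold runningCost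
    linarith
  have hE : ∀ᵐ ω ∂μ, ω ∈ C →
      EE.E t (runningCost ζ X t N) ω ≤ EE.E t (runningCost (runMax L t) X t N) ω := by
    filter_upwards [hZ_flat, hL_rep] with ω hflat hrep hω
    exact ((congrFun hZ_def ω).symm.trans ((hflat hω.1).trans hrep)).le
  have hC₀ := EE.measure_eq_zero_of_lt_of_E_le ht.le
    (stronglyMeasurable_runningCost (hM_adapted t) hX_adapted le_rfl)
    (memLp_runningCost (hM_sqInt t) hX_sqInt le_rfl)
    (stronglyMeasurable_runningCost (fun u _ hu => hζ_adapted u hu) hX_adapted le_rfl)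
    (memLp_runningCost (fun u _ hu => hζ_sqInt u hu) hX_sqInt le_rfl) hC hlt hE
  filter_upwards [measure_eq_zero_iff_ae_notMem.1 hC₀] with ω hω hinc
  exact not_lt.1 fun h => hω ⟨hinc, h⟩

end Skorokhod

theorem skorokhod_obstacle_uniqueness_general
{Ω : Type*}
    [m0 : MeasurableSpace Ω]
    (μ : Measure Ω)
    (F : Filtration ℕ m0) (N : ℕ)
    (EE : NLExp μ F N)
(X : ℕ → Ω → ℝ)
    (hX_adapted : ∀ t, t ≤ N → StronglyMeasurable[F t] (X t))
    (hX_sqInt : ∀ t, t ≤ N → MemLp (X t) 2 μ)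
(L : ℕ → Ω → ℝ)
    (hL_adapted : ∀ t, t < N → StronglyMeasurable[F t] (L t))
    (hL_sqInt : ∀ t, t < N →
      MemLp (fun ω => ∑ u ∈ Finset.Ico t N, runMax L t u ω) 2 μ)
    (hL_rep : ∀ t, t < N →
      X t =ᵐ[μ] EE.E t fun ω => (∑ u ∈ Finset.Ico t N, runMax L t u ω) + X N ω)
    (ζ : ℕ → Ω → ℝ)
    (hζ_adapted : ∀ t, t < N → StronglyMeasurable[F t] (ζ t))
    (hζ_sqInt : ∀ t, t < N → MemLp (ζ t) 2 μ)
    (hζ_mono : ∀ᵐ ω ∂μ, ∀ s t, s ≤ t → t < N → ζ s ω ≤ ζ t ω)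
    (Z : ℕ → Ω → ℝ)
    (hZ_def : ∀ t, t < N →
      Z t = EE.E t fun ω => (∑ u ∈ Finset.Ico t N, ζ u ω) + X N ω)
    (hZ_dom : ∀ t, t ≤ N → X t ≤ᵐ[μ] Z t)
    (hZ_flat : ∀ᵐ ω ∂μ, ∀ t, t < N →
      (t = 0 ∨ ζ (t - 1) ω < ζ t ω) → Z t ω = X t ω) :
    ∀ t, t < N → ζ t =ᵐ[μ] fun ω => runMax L 0 t ω := by
  have hM_adapted : ∀ s u, s ≤ u → u < N → StronglyMeasurable[F u] (fun ω => runMax L s u ω) :=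
    fun s u hsu hu => stronglyMeasurable_runMax hsu fun v _ hvu =>
      (hL_adapted v (by omega)).mono (F.mono hvu)
  have hM_sqInt : ∀ s u, s ≤ u → u < N → MemLp (fun ω => runMax L s u ω) 2 μ :=
    fun s u hsu hu => memLp_runMax hsu fun v _ hvu => memLp_of_memLp_sum_runMax
      (fun v hv => ((hL_adapted v hv).mono (F.le v)).aestronglyMeasurable) hL_sqInt (by omega)
  have hle : ∀ᵐ ω ∂μ, ∀ t ∈ Finset.range N, L t ω ≤ ζ t ω :=
    (eventually_all_finset _).2 fun t ht => ae_L_le_ζ_of_dominates EE hX_adapted hX_sqInt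
      hL_adapted hM_adapted hM_sqInt hL_rep hζ_adapted hζ_sqInt hZ_def hZ_flat
      (Finset.mem_range.1 ht) (hZ_dom t (Finset.mem_range.1 ht).le)
  have hM_le : ∀ᵐ ω ∂μ, ∀ t u, t ≤ u → u < N → runMax L t u ω ≤ ζ u ω := by
    filter_upwards [hζ_mono, hle] with ω hmono hle t u
    exact runMax_le_of_le_of_monotone hmono fun v hv => hle v (Finset.mem_range.2 hv)
  have hge : ∀ᵐ ω ∂μ, ∀ t ∈ Finset.range N, (t = 0 ∨ ζ (t - 1) ω < ζ t ω) → ζ t ω ≤ L t ω :=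
    (eventually_all_finset _).2 fun t ht => ae_ζ_le_L_of_flat EE hX_adapted hX_sqInt hL_adapted
      hM_adapted hM_sqInt hζ_adapted hζ_sqInt (Finset.mem_range.1 ht)
      (hL_rep t (Finset.mem_range.1 ht)) (hZ_def t (Finset.mem_range.1 ht))
      (hZ_flat.mono fun ω h => h t (Finset.mem_range.1 ht)) (hM_le.mono fun ω h => h t)
  intro t ht
  filter_upwards [hζ_mono, hle, hge] with ω hmono hle hge
  exact eq_runMax_of_le_of_le_at_increase hmono (fun t ht => hle t (Finset.mem_range.2 ht))
    (fun t ht => hge t (Finset.mem_range.2 ht)) t ht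

/-- **Skorokhod-type obstacle problem, uniqueness.** If `ζ` is another adapted,
square-integrable, a.s. nondecreasing process whose associated process
`Z_t := E t [∑_{u=t}^{N-1} ζ_u + X_N]` (`Z_N := X_N`) dominates `X` and satisfies
`Z_t = X_t` a.s. at every point of increase of `ζ` (convention `ζ_{-1} = -∞`), then
`ζ_t = max_{0≤v≤t} L_v` a.s. for every `t ∈ {0,...,N-1}`. -/
theorem skorokhod_obstacle_uniqueness
{Ω : Type*} [TopologicalSpace Ω] [PolishSpace Ω]
    [m0 : MeasurableSpace Ω] [BorelSpace Ω]
    (μ : Measure Ω) [IsProbabilityMeasure μ]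
    (F : Filtration ℕ m0) (N : ℕ) (hN : 1 ≤ N)
    (EE : NLExp μ F N)
(X : ℕ → Ω → ℝ)
    (hX_adapted : ∀ t, t ≤ N → StronglyMeasurable[F t] (X t))
    (hX_sqInt : ∀ t, t ≤ N → MemLp (X t) 2 μ)
(L : ℕ → Ω → ℝ)
    (hL_adapted : ∀ t, t < N → StronglyMeasurable[F t] (L t))
    (hL_sqInt : ∀ t, t < N →
      MemLp (fun ω => ∑ u ∈ Finset.Ico t N, runMax L t u ω) 2 μ)
    (hL_rep : ∀ t, t < N →
      X t =ᵐ[μ] EE.E t fun ω => (∑ u ∈ Finset.Ico t N, runMax L t u ω) + X N ω)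
    (ζ : ℕ → Ω → ℝ)
    (hζ_adapted : ∀ t, t < N → StronglyMeasurable[F t] (ζ t))
    (hζ_sqInt : ∀ t, t < N → MemLp (ζ t) 2 μ)
    (hζ_mono : ∀ᵐ ω ∂μ, ∀ s t, s ≤ t → t < N → ζ s ω ≤ ζ t ω)
    (Z : ℕ → Ω → ℝ)
    (hZ_def : ∀ t, t < N →
      Z t = EE.E t fun ω => (∑ u ∈ Finset.Ico t N, ζ u ω) + X N ω)
    (hZ_N : Z N = X N)
    (hZ_dom : ∀ t, t ≤ N → X t ≤ᵐ[μ] Z t)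
    (hZ_flat : ∀ᵐ ω ∂μ, ∀ t, t < N →
      (t = 0 ∨ ζ (t - 1) ω < ζ t ω) → Z t ω = X t ω) :
    ∀ t, t < N → ζ t =ᵐ[μ] fun ω => runMax L 0 t ω :=
  skorokhod_obstacle_uniqueness_general (m0 := m0) μ F N EE X hX_adapted hX_sqInt L hL_adapted
    hL_sqInt hL_rep ζ hζ_adapted hζ_sqInt hζ_mono Z hZ_def hZ_dom hZ_flat
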